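/- Explicit m-vector for a fixed-direction qubit Hamiltonian: let H(θ) = B(sin θ σ₁ + cos θ σ₃) with B ≠ 0 and U(θ) = exp(−i t H(θ)). Then the Bloch vector of M_θ = i U(θ)† ∂_θU(θ), defined by (m_θ)_k = ½ Tr(σ_k M_θ), equals sin(Bt)·(cos θ cos(Bt), −sin(Bt), −sin θ cos(Bt)); in particular ‖m_θ‖² = sin²(Bt). -/

import Mathlib

/-!
The field axis `N(θ) = sin θ σ₁ + cos θ σ₃` squares to the identity, so the exponential series
splits into its even and odd parts and `U(θ) = cos(Bt) - i sin(Bt) N(θ)`. Only `N` depends on `θ`,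
and multiplying out `i U(θ)ᴴ U'(θ)` gives `σ · m_θ`; since `½ Tr(σⱼ σₖ) = δⱼₖ`, the traces read off
`m_θ`, whose squared length is `sin²(Bt)` by `sin² + cos² = 1`.
-/

open Matrix Complex

attribute [local instance] Matrix.frobeniusNormedAddCommGroup Matrix.frobeniusNormedSpace

noncomputable section

def σ1 : Matrix (Fin 2) (Fin 2) ℂ := !![0, 1; 1, 0]
def σ2 : Matrix (Fin 2) (Fin 2) ℂ := !![0, -Complex.I; Complex.I, 0]
def σ3 : Matrix (Fin 2) (Fin 2) ℂ := !![1, 0; 0, -1]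

def pauli : Fin 3 → Matrix (Fin 2) (Fin 2) ℂ := ![σ1, σ2, σ3]

/-- `σ · a` for a real 3-vector `a`. -/
def sdot (a : Fin 3 → ℝ) : Matrix (Fin 2) (Fin 2) ℂ :=
  (a 0 : ℂ) • σ1 + (a 1 : ℂ) • σ2 + (a 2 : ℂ) • σ3

theorem NormedSpace.exp_smul_of_mul_self_eq_one {A : Type*} [Ring A] [Algebra ℂ A]
    [TopologicalSpace A] [IsTopologicalRing A] [ContinuousSMul ℂ A] [T2Space A]
    {N : A} (hN : N * N = 1) (z : ℂ) :
    NormedSpace.exp (z • N) = Complex.cosh z • (1 : A) + Complex.sinh z • N := by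
  have hpow_even (k : ℕ) : N ^ (2 * k) = 1 := by rw [pow_mul, sq, hN, one_pow]
  rw [NormedSpace.exp_eq_tsum ℂ]
  refine (HasSum.even_add_odd ?_ ?_).tsum_eq
  · convert (Complex.hasSum_cosh z).smul_const (1 : A) using 2 with k
    rw [smul_pow, hpow_even, smul_smul, div_eq_inv_mul]
  · convert (Complex.hasSum_sinh z).smul_const N using 2 with k
    rw [smul_pow, pow_succ N, hpow_even, one_mul, smul_smul, div_eq_inv_mul]

def fieldAxis (θ : ℝ) : Matrix (Fin 2) (Fin 2) ℂ := (Real.sin θ : ℂ) • σ1 + (Real.cos θ : ℂ) • σ3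

theorem fieldAxis_mul_self (θ : ℝ) : fieldAxis θ * fieldAxis θ = 1 := by
  ext i j
  fin_cases i <;> fin_cases j <;>
    simp [fieldAxis, σ1, σ3, Matrix.mul_apply, Fin.sum_univ_two, ← sq, mul_comm]

theorem hasDerivAt_fieldAxis (θ : ℝ) :
    HasDerivAt fieldAxis ((Real.cos θ : ℂ) • σ1 - (Real.sin θ : ℂ) • σ3) θ := by
  have hsin := (Real.hasDerivAt_sin θ).ofReal_comp
  have hcos := (Real.hasDerivAt_cos θ).ofReal_comp
  refine ((hsin.smul_const σ1).add (hcos.smul_const σ3)).congr_deriv ?_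
  rw [Complex.ofReal_neg, neg_smul, sub_eq_add_neg]

theorem exp_fieldAxis (s θ : ℝ) :
    NormedSpace.exp ((-(Complex.I * (s : ℂ))) • fieldAxis θ) =
      (Real.cos s : ℂ) • 1 - (Complex.I * Real.sin s) • fieldAxis θ := by
  rw [show -(Complex.I * (s : ℂ)) = ((-s : ℝ) : ℂ) * Complex.I by push_cast; ring,
    NormedSpace.exp_smul_of_mul_self_eq_one (fieldAxis_mul_self θ), Complex.cosh_mul_I,
    Complex.sinh_mul_I, ← Complex.ofReal_cos, ← Complex.ofReal_sin, Real.cos_neg, Real.sin_neg,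
    sub_eq_add_neg, ← neg_smul]
  push_cast
  module

theorem pauli_mul_sdot_trace (a : Fin 3 → ℝ) (k : Fin 3) :
    (1 / 2 : ℂ) * (pauli k * sdot a).trace = a k := by
  fin_cases k <;> simp [pauli, sdot, σ1, σ2, σ3, Matrix.trace, Fin.sum_univ_two]
  · ring
  · linear_combination (-(a 1 : ℂ)) * Complex.I_mul_I
  · ring

theorem I_smul_conjTranspose_mul_eq_sdot (s θ : ℝ) :
    Complex.I • (((Real.cos s : ℂ) • 1 - (Complex.I * Real.sin s) • fieldAxis θ)ᴴ *
      -((Complex.I * Real.sin s) • ((Real.cos θ : ℂ) • σ1 - (Real.sin θ : ℂ) • σ3))) =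
    sdot ![Real.sin s * (Real.cos θ * Real.cos s), Real.sin s * (-Real.sin s),
      Real.sin s * (-Real.sin θ * Real.cos s)] := by
  ext i j
  fin_cases i <;> fin_cases j <;>
    simp [fieldAxis, sdot, σ1, σ2, σ3, Matrix.mul_apply, Fin.sum_univ_two, ← Complex.sin_conj,
      ← Complex.cos_conj] <;> ring_nf <;>
    simp only [Complex.I_sq, Complex.I_pow_three, Complex.sin_sq] <;> ring

theorem m_vector_fixed_direction_general (B t : ℝ)
    (U : ℝ → Matrix (Fin 2) (Fin 2) ℂ)
    (hU : ∀ θ : ℝ, U θ = NormedSpace.exp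
      ((-(Complex.I * (t : ℂ) * (B : ℂ))) •
        ((Real.sin θ : ℂ) • σ1 + (Real.cos θ : ℂ) • σ3)))
    (θ : ℝ)
    (M : Matrix (Fin 2) (Fin 2) ℂ)
    (hM : M = Complex.I • ((U θ)ᴴ * deriv U θ))
    (mθ : Fin 3 → ℝ)
    (hmθ : mθ = ![Real.sin (B * t) * (Real.cos θ * Real.cos (B * t)),
                  Real.sin (B * t) * (-Real.sin (B * t)),
                  Real.sin (B * t) * (-Real.sin θ * Real.cos (B * t))]) :
    (∀ k : Fin 3, (1 / 2 : ℂ) * (pauli k * M).trace = ((mθ k : ℝ) : ℂ)) ∧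
    mθ ⬝ᵥ mθ = Real.sin (B * t) ^ 2 := by
  have hU_eq : U = fun x ↦
      (Real.cos (B * t) : ℂ) • 1 - (Complex.I * Real.sin (B * t)) • fieldAxis x := by
    funext x
    rw [hU, ← exp_fieldAxis]
    congr 2
    push_cast
    ring
  have hdU : deriv U θ =
      -((Complex.I * Real.sin (B * t)) • ((Real.cos θ : ℂ) • σ1 - (Real.sin θ : ℂ) • σ3)) := by
    rw [hU_eq]
    exact (((hasDerivAt_fieldAxis θ).const_smul (Complex.I * Real.sin (B * t))).const_sub
      ((Real.cos (B * t) : ℂ) • 1)).deriv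
  have hM_eq : M = sdot mθ := by
    rw [hM, hdU, hU_eq, hmθ, I_smul_conjTranspose_mul_eq_sdot]
  refine ⟨fun k ↦ hM_eq ▸ pauli_mul_sdot_trace mθ k, ?_⟩
  subst hmθ
  simp only [dotProduct, Fin.sum_univ_three, cons_val_zero, cons_val_one, cons_val_two,
    head_cons, tail_cons]
  linear_combination (Real.sin (B * t) ^ 2 * Real.cos (B * t) ^ 2) * Real.sin_sq_add_cos_sq θ +
    Real.sin (B * t) ^ 2 * Real.sin_sq_add_cos_sq (B * t)

theorem m_vector_fixed_direction (B t : ℝ) (hB : B ≠ 0)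
    (U : ℝ → Matrix (Fin 2) (Fin 2) ℂ)
    (hU : ∀ θ : ℝ, U θ = NormedSpace.exp
      ((-(Complex.I * (t : ℂ) * (B : ℂ))) •
        ((Real.sin θ : ℂ) • σ1 + (Real.cos θ : ℂ) • σ3)))
    (θ : ℝ)
    (M : Matrix (Fin 2) (Fin 2) ℂ)
    (hM : M = Complex.I • ((U θ)ᴴ * deriv U θ))
    (mθ : Fin 3 → ℝ)
    (hmθ : mθ = ![Real.sin (B * t) * (Real.cos θ * Real.cos (B * t)),
                  Real.sin (B * t) * (-Real.sin (B * t)),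
                  Real.sin (B * t) * (-Real.sin θ * Real.cos (B * t))]) :
    (∀ k : Fin 3, (1 / 2 : ℂ) * (pauli k * M).trace = ((mθ k : ℝ) : ℂ)) ∧
    mθ ⬝ᵥ mθ = Real.sin (B * t) ^ 2 :=
  m_vector_fixed_direction_general B t U hU θ M hM mθ hmθ
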